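/- arXiv:1602.05699 — 3 statements merged into one kernel-verified Lean document; each statement's English description precedes it below -/
import Mathlib

section
/- For every prioritization P = ⟨P₁,…,Pₙ⟩ of Σ there exists a weight assignment w : α → ℕ such that for all S, S' ⊆ Σ, S ≤_P S' holds if and only if ∑_{r ∈ S} w r ≤ ∑_{r ∈ S'} w r (prioritized cardinality can be translated into weights). -/
/-!
Put `c = |Σ|` and give each rule of `Pᵢ` the weight `(c + 1) ^ #{j | i < j}`. The weight of `S`
is then the number with base-`(c + 1)` digits `|S ∩ P₁|, …, |S ∩ Pₙ|`, most significant first.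
All digits are at most `c`, so comparing these numbers is comparing the digit strings
lexicographically, which is `≤_P`.
-/

/-- Prioritized cardinality `S ≤_P S'`. -/
def prioCard {α : Type*} [DecidableEq α] {n : ℕ} (P : Fin n → Finset α)
    (S S' : Finset α) : Prop :=
  (∀ i, (S ∩ P i).card = (S' ∩ P i).card) ∨
    ∃ i, (S ∩ P i).card < (S' ∩ P i).card ∧ ∀ j, j < i → (S ∩ P j).card = (S' ∩ P j).card

open Finset

theorem Nat.mul_sum_pow_lt_pow {c m : ℕ} {s : Finset ℕ} (hs : ∀ k ∈ s, k < m) :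
    c * ∑ k ∈ s, (c + 1) ^ k < (c + 1) ^ m :=
  calc c * ∑ k ∈ s, (c + 1) ^ k
      ≤ c * ∑ k ∈ range m, (c + 1) ^ k := by
        gcongr
        exact fun k hk => mem_range.2 (hs k hk)
    _ < (∑ k ∈ range m, (c + 1) ^ k) * c + 1 := by rw [mul_comm]; exact Nat.lt_succ_self _
    _ = (c + 1) ^ m := geom_sum_mul_add c m

section Superincreasing

variable {ι : Type*} [LinearOrder ι] [LocallyFiniteOrderTop ι]

theorem card_Ioi_strictAnti : StrictAnti fun i : ι => #(Ioi i) := fun _ _ hij =>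
  card_lt_card (Ioi_ssubset_Ioi hij)

theorem mul_sum_Ioi_pow_card_Ioi_lt (c : ℕ) (i : ι) :
    c * ∑ j ∈ Ioi i, (c + 1) ^ #(Ioi j) < (c + 1) ^ #(Ioi i) := by
  rw [← sum_image fun j _ k _ h => card_Ioi_strictAnti.injective h]
  refine Nat.mul_sum_pow_lt_pow fun k hk => ?_
  obtain ⟨j, hj, rfl⟩ := mem_image.1 hk
  exact card_Ioi_strictAnti (mem_Ioi.1 hj)

variable [Fintype ι]

theorem sum_mul_lt_of_toLex_lt {c : ℕ} {u : ι → ℕ} (hu : ∀ i, c * ∑ j ∈ Ioi i, u j < u i)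
    {a b : ι → ℕ} (ha : ∀ j, a j ≤ c) (hab : toLex a < toLex b) :
    ∑ j, a j * u j < ∑ j, b j * u j := by
  obtain ⟨i, hpre, hi⟩ := hab
  have sum_eq (f : ι → ℕ) : ∑ j, f j = ∑ j with j < i, f j + (f i + ∑ j ∈ Ioi i, f j) := by
    rw [← sum_filter_add_sum_filter_not univ (· < i), add_sum_Ioi_eq_sum_Ici]
    congr 2
    ext j
    simp
  have head : ∑ j with j < i, a j * u j = ∑ j with j < i, b j * u j :=
    sum_congr rfl fun j hj => congrArg (· * u j) (hpre j (mem_filter.1 hj).2)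
  have tail : ∑ j ∈ Ioi i, a j * u j < u i :=
    calc ∑ j ∈ Ioi i, a j * u j ≤ ∑ j ∈ Ioi i, c * u j := by gcongr with j; exact ha j
      _ = c * ∑ j ∈ Ioi i, u j := (mul_sum _ _ _).symm
      _ < u i := hu i
  rw [sum_eq, sum_eq fun j => b j * u j, head]
  have : a i * u i + u i ≤ b i * u i := by
    rw [← Nat.succ_mul]; exact Nat.mul_le_mul_right _ hi
  omega

theorem sum_mul_le_sum_mul_iff_toLex_le {c : ℕ} {u : ι → ℕ}
    (hu : ∀ i, c * ∑ j ∈ Ioi i, u j < u i) {a b : ι → ℕ} (ha : ∀ j, a j ≤ c)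
    (hb : ∀ j, b j ≤ c) : ∑ j, a j * u j ≤ ∑ j, b j * u j ↔ toLex a ≤ toLex b := by
  constructor
  · intro h
    by_contra! hba
    exact (sum_mul_lt_of_toLex_lt hu hb hba).not_ge h
  · intro h
    rcases h.eq_or_lt with hab | hab
    · rw [toLex_inj.1 hab]
    · exact (sum_mul_lt_of_toLex_lt hu ha hab).le

end Superincreasing

theorem sum_sum_filter_mem_eq_sum_card_inter_mul {α ι : Type*} [DecidableEq α] [Fintype ι]
    (P : ι → Finset α) (u : ι → ℕ) (S : Finset α) :
    ∑ r ∈ S, ∑ i with r ∈ P i, u i = ∑ i, #(S ∩ P i) * u i := by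
  simp_rw [sum_filter]
  rw [sum_comm]
  refine sum_congr rfl fun i _ => ?_
  rw [sum_ite_mem, sum_const, smul_eq_mul]

theorem prioCard_iff_toLex_le {α : Type*} [DecidableEq α] {n : ℕ} (P : Fin n → Finset α)
    (S S' : Finset α) :
    prioCard P S S' ↔ toLex (fun i => #(S ∩ P i)) ≤ toLex (fun i => #(S' ∩ P i)) := by
  rw [le_iff_eq_or_lt, toLex_inj, funext_iff]
  exact or_congr Iff.rfl (exists_congr fun i => and_comm)

theorem prioCard_translatable_into_weights_general
    {α : Type*} [DecidableEq α] (Rules : Finset α)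
    (n : ℕ) (P : Fin n → Finset α) :
    ∃ w : α → ℕ, ∀ S ⊆ Rules, ∀ S' ⊆ Rules,
      (prioCard P S S' ↔ (∑ r ∈ S, w r) ≤ (∑ r ∈ S', w r)) := by
  set c := #Rules
  refine ⟨fun r => ∑ i with r ∈ P i, (c + 1) ^ #(Ioi i), fun S hS S' hS' => ?_⟩
  have hbound {T : Finset α} (hT : T ⊆ Rules) (i : Fin n) : #(T ∩ P i) ≤ c :=
    card_le_card (inter_subset_left.trans hT)
  rw [prioCard_iff_toLex_le, sum_sum_filter_mem_eq_sum_card_inter_mul,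
    sum_sum_filter_mem_eq_sum_card_inter_mul,
    sum_mul_le_sum_mul_iff_toLex_le (mul_sum_Ioi_pow_card_Ioi_lt c) (hbound hS) (hbound hS')]

/-- Prioritized cardinality can be translated into weights: for every prioritization
`P` of `Σ` there is a weight assignment `w` such that, on subsets of `Σ`,
`S ≤_P S'` iff `∑ r ∈ S, w r ≤ ∑ r ∈ S', w r`. -/
theorem prioCard_translatable_into_weights
    {α : Type*} [DecidableEq α] (Rules : Finset α)
    (n : ℕ) (P : Fin n → Finset α)
    (hdisj : ∀ i j, i ≠ j → Disjoint (P i) (P j))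
    (hcover : Finset.univ.biUnion P = Rules) :
    ∃ w : α → ℕ, ∀ S ⊆ Rules, ∀ S' ⊆ Rules,
      (prioCard P S S' ↔ (∑ r ∈ S, w r) ≤ (∑ r ∈ S', w r)) :=
  prioCard_translatable_into_weights_general Rules n P
end

section
/- The weight preference cannot in general be translated into prioritized cardinality: there exist a finite set Σ (one may take Σ = {a, b, c} with three distinct elements) and a weight assignment w : α → ℕ (e.g., w a = 1, w b = 1, w c = 2) such that for every prioritization P = ⟨P₁,…,Pₙ⟩ of Σ there are subsets S, S' ⊆ Σ with (S ≤_w S' not equivalent to S ≤_P S'). -/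
lemma card_eq_sum_inter {α : Type*} [DecidableEq α] {n : ℕ} (P : Fin n → Finset α)
    (hdisj : ∀ i j, i ≠ j → Disjoint (P i) (P j))
    (S : Finset α) (hS : S ⊆ Finset.univ.biUnion P) :
    S.card = ∑ i, (S ∩ P i).card := by
  have : S = Finset.univ.biUnion (fun i => S ∩ P i) := by
    ext x
    simp only [Finset.mem_biUnion, Finset.mem_inter, Finset.mem_univ, true_and]
    constructor
    · intro hx
      obtain ⟨i, _, hi⟩ := Finset.mem_biUnion.mp (hS hx)
      exact ⟨i, hx, hi⟩
    · rintro ⟨i, hx, _⟩; exact hx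
  conv_lhs => rw [this]
  exact Finset.card_biUnion (fun i _ j _ hij =>
    Finset.disjoint_of_subset_left Finset.inter_subset_right
      (Finset.disjoint_of_subset_right Finset.inter_subset_right (hdisj i j hij)))

/-- The weight preference cannot in general be translated into prioritized
cardinality: taking `Σ = {a, b, c}` with three distinct elements and the weight
assignment `w a = 1`, `w b = 1`, `w c = 2`, for every prioritization `P` of `Σ`
there are subsets `S, S' ⊆ Σ` on which `≤_w` and `≤_P` disagree. -/
theorem weights_not_translatable_into_prioCard
    {α : Type*} [DecidableEq α] (a b c : α)
    (hab : a ≠ b) (hac : a ≠ c) (hbc : b ≠ c) :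
    ∃ (Rules : Finset α) (w : α → ℕ),
      Rules = {a, b, c} ∧ w a = 1 ∧ w b = 1 ∧ w c = 2 ∧
      ∀ (n : ℕ) (P : Fin n → Finset α),
        (∀ i j, i ≠ j → Disjoint (P i) (P j)) →
        Finset.univ.biUnion P = Rules →
        ∃ S ⊆ Rules, ∃ S' ⊆ Rules,
          ¬ (((∑ r ∈ S, w r) ≤ (∑ r ∈ S', w r)) ↔ prioCard P S S') := by
  refine ⟨{a, b, c}, fun x => if x = c then 2 else 1, rfl, by simp [hac], by simp [hbc],
    by simp, ?_⟩
  intro n P hdisj hcov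
  set w : α → ℕ := fun x => if x = c then 2 else 1 with hw
  have hS₀ : ({a, b} : Finset α) ⊆ {a, b, c} := by
    intro x hx
    simp only [Finset.mem_insert, Finset.mem_singleton] at hx ⊢
    tauto
  have hS₁ : ({c} : Finset α) ⊆ {a, b, c} := by
    intro x hx
    simp only [Finset.mem_insert, Finset.mem_singleton] at hx ⊢
    tauto
  have hwsum₀ : (∑ r ∈ ({a, b} : Finset α), w r) = 2 := by
    rw [Finset.sum_pair hab]
    simp [hw, hac, hbc]
  have hwsum₁ : (∑ r ∈ ({c} : Finset α), w r) = 2 := by simp [hw]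
  -- cardinality sums
  have hcard₀ : ∑ i, (({a, b} : Finset α) ∩ P i).card = 2 := by
    rw [← card_eq_sum_inter P hdisj _ (by rw [hcov]; exact hS₀)]
    rw [Finset.card_pair hab]
  have hcard₁ : ∑ i, (({c} : Finset α) ∩ P i).card = 1 := by
    rw [← card_eq_sum_inter P hdisj _ (by rw [hcov]; exact hS₁)]
    simp
  -- not both directions of prioCard can hold
  have hnotboth : ¬ (prioCard P {a, b} {c} ∧ prioCard P {c} {a, b}) := by
    rintro ⟨h₀, h₁⟩
    have hne : ¬ ∀ i, (({a, b} : Finset α) ∩ P i).card = (({c} : Finset α) ∩ P i).card := by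
      intro h
      have : (2 : ℕ) = 1 := by
        rw [← hcard₀, ← hcard₁]
        exact Finset.sum_congr rfl (fun i _ => h i)
      omega
    rcases h₀ with h₀ | ⟨i₁, hi₁, hj₁⟩
    · exact hne h₀
    rcases h₁ with h₁ | ⟨i₂, hi₂, hj₂⟩
    · exact hne (fun i => (h₁ i).symm)
    rcases lt_trichotomy i₁ i₂ with h | h | h
    · exact absurd (hj₂ i₁ h).symm (Nat.ne_of_lt hi₁)
    · subst h; omega
    · exact absurd (hj₁ i₂ h).symm (Nat.ne_of_lt hi₂)
  by_cases hdir : prioCard P {a, b} {c}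
  · refine ⟨{c}, hS₁, {a, b}, hS₀, ?_⟩
    rw [hwsum₀, hwsum₁]
    intro hiff
    exact hnotboth ⟨hdir, hiff.mp le_rfl⟩
  · refine ⟨{a, b}, hS₀, {c}, hS₁, ?_⟩
    rw [hwsum₀, hwsum₁]
    intro hiff
    exact hdir (hiff.mp le_rfl)
end

section
/- Let P = ⟨P₁,…,Pₙ⟩ be a prioritization of Σ. For all S, S' ⊆ Σ, if S ⊆_P S' and not S' ⊆_P S (strict prioritized set inclusion), then S ≤_P S' and not S' ≤_P S (strict prioritized cardinality). Consequently, for every consistency family F, every repair w.r.t. ≤_P and F is a repair w.r.t. ⊆_P and F. -/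
/-- Prioritized set inclusion `S ⊆_P S'`. -/
def prioSubset {α : Type*} [DecidableEq α] {n : ℕ} (P : Fin n → Finset α)
    (S S' : Finset α) : Prop :=
  (∀ i, S ∩ P i = S' ∩ P i) ∨
    ∃ i, S ∩ P i ⊂ S' ∩ P i ∧ ∀ j, j < i → S ∩ P j = S' ∩ P j

/-- Strict prioritized set inclusion implies strict prioritized cardinality;
consequently, every repair w.r.t. `≤_P` is a repair w.r.t. `⊆_P`. -/
theorem strict_prioSubset_imp_strict_prioCard_and_repairs
    {α : Type*} [DecidableEq α] (Rules : Finset α)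
    (n : ℕ) (P : Fin n → Finset α)
    (hdisj : ∀ i j, i ≠ j → Disjoint (P i) (P j))
    (hcover : Finset.univ.biUnion P = Rules) :
    (∀ S ⊆ Rules, ∀ S' ⊆ Rules,
        (prioSubset P S S' ∧ ¬ prioSubset P S' S) →
        (prioCard P S S' ∧ ¬ prioCard P S' S)) ∧
      (∀ (F : Finset α → Prop) (S : Finset α),
        (S ⊆ Rules ∧ F S ∧
          ∀ S' ⊆ Rules, (prioCard P S S' ∧ ¬ prioCard P S' S) → ¬ F S') →
        (S ⊆ Rules ∧ F S ∧
          ∀ S' ⊆ Rules, (prioSubset P S S' ∧ ¬ prioSubset P S' S) → ¬ F S')) := by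

  have key : ∀ S S' : Finset α,
      (prioSubset P S S' ∧ ¬ prioSubset P S' S) →
      (prioCard P S S' ∧ ¬ prioCard P S' S) := by
    intro S S' ⟨h1, h2⟩
    rcases h1 with h1 | ⟨i, hi, hlt⟩
    · exact absurd (Or.inl fun i => (h1 i).symm) h2
    have hcardlt : (S ∩ P i).card < (S' ∩ P i).card := Finset.card_lt_card hi
    constructor
    · exact Or.inr ⟨i, hcardlt, fun j hj => by rw [hlt j hj]⟩
    · rintro (h | ⟨k, hk, hklt⟩)
      · have := h i; omega
      · rcases lt_trichotomy k i with h' | h' | h'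
        · rw [hlt k h'] at hk; exact absurd rfl (Nat.ne_of_lt hk)
        · subst h'; omega
        · have := hklt i h'; omega
  refine ⟨fun S _ S' _ => key S S', fun F S ⟨hS, hF, hrep⟩ => ⟨hS, hF, ?_⟩⟩
  intro S' hS' h
  exact hrep S' hS' (key S S' h)
end
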